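/- Under the one-factor model Σ = σ²ββᵀ + Δ with β₁ ≤ ⋯ ≤ β_p, δ_i² > 0, σ² > 0 and Σ_{j=1}^p β_j/δ_j² ≥ 0, let w^L be the LOMV solution with active set K and k = |K|. Then exactly one of the following holds: either K = {1,…,p} and the unconstrained fully invested minimum variance solution w^{LS} = Σ⁻¹1_p/(1_pᵀΣ⁻¹1_p) is already long-only and equals w^L; or K ≠ {1,…,p}, in which case Σ_{j=1}^k β_j/δ_j² > 0 and for every index i, w^L_i > 0 if and only if β_i < (1/σ² + Σ_{j=1}^k β_j²/δ_j²) / (Σ_{j=1}^k β_j/δ_j²). -/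

import Mathlib

/-!
At a minimiser `w` of `v ⬝ᵥ Σ *ᵥ v` on the simplex, shifting weight from an asset `i` with
`wᵢ > 0` to any other asset cannot lower the variance, so the marginal variances `(Σ w)ᵢ` equal
`λ = wᵀ Σ w` on the active set `K` and are at least `λ` elsewhere. In the one-factor model
`(Σ w)ᵢ = σ² βᵢ b + δᵢ² wᵢ` with `b = βᵀ w`, hence `wᵢ > 0 ↔ σ² βᵢ b < λ`, and summing `βᵢ wᵢ`
over `K` gives `b (1 + σ² C_K) = λ B_K` with `B_K = ∑_K βⱼ/δⱼ²`, `C_K = ∑_K βⱼ²/δⱼ²`.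

If every asset is active then `Σ w = λ 1`, i.e. `w` is the long-short portfolio. Otherwise
the sign condition forces `b > 0`: for `b ≤ 0` every inactive beta would be negative and
`B_K ≤ 0`. Then `B_K > 0`, `K` is an initial segment because `β` is monotone, and the
active-set condition reads `βᵢ < λ / (σ² b) = (1/σ² + C_K) / B_K`.
-/

open Matrix Finset Filter Topology

theorem nonneg_of_forall_mem_Ioc_nonneg_add_mul {a q ε : ℝ} (hε : 0 < ε)
    (h : ∀ t ∈ Set.Ioc 0 ε, 0 ≤ a + t * q) : 0 ≤ a := by
  have hlim : Tendsto (fun t => a + t * q) (𝓝[>] 0) (𝓝 a) :=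
    ((by fun_prop : Continuous fun t : ℝ => a + t * q).tendsto' 0 a (by simp)).mono_left
      nhdsWithin_le_nhds
  exact ge_of_tendsto hlim (eventually_of_mem (Ioc_mem_nhdsGT hε) h)

theorem add_smul_single_sub_single_mem_stdSimplex {ι : Type*} [Fintype ι] [DecidableEq ι]
    {w : ι → ℝ} (hw : w ∈ stdSimplex ℝ ι) {i j : ι} (hij : i ≠ j) {t : ℝ}
    (ht : t ∈ Set.Icc 0 (w i)) :
    w + t • (Pi.single j 1 - Pi.single i 1) ∈ stdSimplex ℝ ι := by
  refine ⟨fun k => ?_, ?_⟩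
  · obtain rfl | hkj := eq_or_ne k j
    · simpa [hij.symm] using add_nonneg (hw.1 _) ht.1
    obtain rfl | hki := eq_or_ne k i
    · simpa [hkj] using ht.2
    · simp [hkj, hki, hw.1 k]
  · simp [Finset.sum_add_distrib, hw.2, ← Finset.mul_sum]

namespace Matrix

variable {ι : Type*}

section LongOnly

variable [Fintype ι]

theorem dotProduct_mulVec_eq_sum_sum (S : Matrix ι ι ℝ) (u v : ι → ℝ) :
    u ⬝ᵥ S *ᵥ v = ∑ i, ∑ j, u i * S i j * v j := by
  simp only [dotProduct, mulVec, Finset.mul_sum, mul_assoc]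

theorem dotProduct_mulVec_add_smul_of_isSymm {S : Matrix ι ι ℝ} (hS : S.IsSymm)
    (w d : ι → ℝ) (t : ℝ) :
    (w + t • d) ⬝ᵥ S *ᵥ (w + t • d) =
      w ⬝ᵥ S *ᵥ w + t * (2 * (d ⬝ᵥ S *ᵥ w) + t * (d ⬝ᵥ S *ᵥ d)) := by
  have hcomm : w ⬝ᵥ S *ᵥ d = d ⬝ᵥ S *ᵥ w := by
    rw [dotProduct_mulVec, ← mulVec_transpose, hS.eq, dotProduct_comm]
  simp only [mulVec_add, mulVec_smul, add_dotProduct, dotProduct_add, smul_dotProduct,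
    dotProduct_smul, hcomm, smul_eq_mul]
  ring

def IsLongOnlyMinVar (S : Matrix ι ι ℝ) (w : ι → ℝ) : Prop :=
  w ∈ stdSimplex ℝ ι ∧ IsMinOn (fun v => v ⬝ᵥ S *ᵥ v) (stdSimplex ℝ ι) w

theorem IsLongOnlyMinVar.mulVec_apply_le {S : Matrix ι ι ℝ} {w : ι → ℝ}
    (hw : IsLongOnlyMinVar S w) (hS : S.IsSymm) {i : ι} (hi : 0 < w i) (j : ι) :
    (S *ᵥ w) i ≤ (S *ᵥ w) j := by
  classical
  obtain rfl | hij := eq_or_ne i j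
  · rfl
  set d : ι → ℝ := Pi.single j 1 - Pi.single i 1
  have hdSw : d ⬝ᵥ S *ᵥ w = (S *ᵥ w) j - (S *ᵥ w) i := by
    simp [d, sub_dotProduct, single_dotProduct]
  have hslope : 0 ≤ 2 * (d ⬝ᵥ S *ᵥ w) := by
    refine nonneg_of_forall_mem_Ioc_nonneg_add_mul (q := d ⬝ᵥ S *ᵥ d) hi fun t ht => ?_
    have hle : w ⬝ᵥ S *ᵥ w ≤ (w + t • d) ⬝ᵥ S *ᵥ (w + t • d) :=
      hw.2 (add_smul_single_sub_single_mem_stdSimplex hw.1 hij (Set.Ioc_subset_Icc_self ht))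
    rw [dotProduct_mulVec_add_smul_of_isSymm hS] at hle
    exact nonneg_of_mul_nonneg_right (by linarith) ht.1
  linarith

theorem IsLongOnlyMinVar.mulVec_apply_eq {S : Matrix ι ι ℝ} {w : ι → ℝ}
    (hw : IsLongOnlyMinVar S w) (hS : S.IsSymm) {i : ι} (hi : 0 < w i) :
    (S *ᵥ w) i = w ⬝ᵥ S *ᵥ w := by
  have hle : ∀ j, w j * (S *ᵥ w) j ≤ w j * (S *ᵥ w) i := fun j => by
    obtain hj | hj := (hw.1.1 j).eq_or_lt
    · simp [← hj]
    · exact mul_le_mul_of_nonneg_left (hw.mulVec_apply_le hS hj i) hj.le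
  have hge : ∀ j, w j * (S *ᵥ w) i ≤ w j * (S *ᵥ w) j := fun j =>
    mul_le_mul_of_nonneg_left (hw.mulVec_apply_le hS hi j) (hw.1.1 j)
  have hsum : ∑ j, w j * (S *ᵥ w) i = (S *ᵥ w) i := by rw [← Finset.sum_mul, hw.1.2, one_mul]
  rw [dotProduct]
  exact le_antisymm (hsum ▸ Finset.sum_le_sum fun j _ => hge j)
    (hsum ▸ Finset.sum_le_sum fun j _ => hle j)

theorem IsLongOnlyMinVar.dotProduct_mulVec_le {S : Matrix ι ι ℝ} {w : ι → ℝ}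
    (hw : IsLongOnlyMinVar S w) (hS : S.IsSymm) (j : ι) :
    w ⬝ᵥ S *ᵥ w ≤ (S *ᵥ w) j := by
  obtain ⟨i, hi⟩ : ∃ i, 0 < w i := by
    by_contra! h
    have : ∑ i, w i = 0 := Finset.sum_eq_zero fun i _ => le_antisymm (h i) (hw.1.1 i)
    linarith [hw.1.2]
  exact hw.mulVec_apply_eq hS hi ▸ hw.mulVec_apply_le hS hi j

theorem eq_inv_mulVec_one_div_sum [DecidableEq ι] {S : Matrix ι ι ℝ} (hS : IsUnit S)
    {w : ι → ℝ} (hw : ∑ i, w i = 1) {c : ℝ} (hc : c ≠ 0) (hSw : S *ᵥ w = fun _ => c) (i : ι) :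
    w i = (S⁻¹ *ᵥ fun _ => (1 : ℝ)) i / ∑ j, (S⁻¹ *ᵥ fun _ => (1 : ℝ)) j := by
  have hinv : (S⁻¹ *ᵥ fun _ => (1 : ℝ)) = c⁻¹ • w := by
    have : (fun _ => (1 : ℝ)) = c⁻¹ • S *ᵥ w := by
      ext; simp [hSw, hc]
    rw [this, mulVec_smul, mulVec_mulVec, nonsing_inv_mul _ ((isUnit_iff_isUnit_det S).mp hS),
      one_mulVec]
  rw [hinv]
  simp only [Pi.smul_apply, smul_eq_mul, ← Finset.mul_sum, hw, mul_one]
  field_simp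

theorem IsLongOnlyMinVar.dotProduct_mulVec_pos {S : Matrix ι ι ℝ} {w : ι → ℝ}
    (hw : IsLongOnlyMinVar S w) (hS : S.PosDef) : 0 < w ⬝ᵥ S *ᵥ w := by
  have hw0 : w ≠ 0 := fun h => by simpa [h] using hw.1.2
  simpa using hS.dotProduct_mulVec_pos hw0

end LongOnly

section OneFactor

variable [DecidableEq ι]

def oneFactorCov (σsq : ℝ) (β δsq : ι → ℝ) : Matrix ι ι ℝ :=
  σsq • vecMulVec β β + diagonal δsq

theorem oneFactorCov_isSymm (σsq : ℝ) (β δsq : ι → ℝ) : (oneFactorCov σsq β δsq).IsSymm := by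
  simp [oneFactorCov, IsSymm, transpose_add, transpose_smul, transpose_vecMulVec]

variable [Fintype ι] {σsq : ℝ} {β δsq w : ι → ℝ}

theorem oneFactorCov_mulVec (σsq : ℝ) (β δsq w : ι → ℝ) :
    oneFactorCov σsq β δsq *ᵥ w = fun i => σsq * β i * (β ⬝ᵥ w) + δsq i * w i := by
  ext i
  simp [oneFactorCov, add_mulVec, smul_mulVec, vecMulVec_mulVec, mulVec_diagonal, mul_comm,
    mul_left_comm]

theorem oneFactorCov_posDef (hσ : 0 ≤ σsq) (hδ : ∀ i, 0 < δsq i) :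
    (oneFactorCov σsq β δsq).PosDef := by
  have hβ : (vecMulVec β β).PosSemidef := by simpa using posSemidef_vecMulVec_self_star β
  exact PosDef.posSemidef_add (hβ.smul hσ) (PosDef.diagonal hδ)

theorem IsLongOnlyMinVar.oneFactor_apply_eq (hw : IsLongOnlyMinVar (oneFactorCov σsq β δsq) w)
    {i : ι} (hi : 0 < w i) :
    σsq * β i * (β ⬝ᵥ w) + δsq i * w i = w ⬝ᵥ oneFactorCov σsq β δsq *ᵥ w :=
  (congrFun (oneFactorCov_mulVec σsq β δsq w) i).symm.trans
    (hw.mulVec_apply_eq (oneFactorCov_isSymm σsq β δsq) hi)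

theorem IsLongOnlyMinVar.oneFactor_le_apply (hw : IsLongOnlyMinVar (oneFactorCov σsq β δsq) w)
    (i : ι) : w ⬝ᵥ oneFactorCov σsq β δsq *ᵥ w ≤ σsq * β i * (β ⬝ᵥ w) + δsq i * w i :=
  (hw.dotProduct_mulVec_le (oneFactorCov_isSymm σsq β δsq) i).trans_eq
    (congrFun (oneFactorCov_mulVec σsq β δsq w) i)

theorem IsLongOnlyMinVar.oneFactor_pos_iff (hδ : ∀ i, 0 < δsq i)
    (hw : IsLongOnlyMinVar (oneFactorCov σsq β δsq) w) (i : ι) :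
    0 < w i ↔ σsq * β i * (β ⬝ᵥ w) < w ⬝ᵥ oneFactorCov σsq β δsq *ᵥ w := by
  refine ⟨fun hi => ?_, fun hlt => ?_⟩
  · linarith [hw.oneFactor_apply_eq hi, mul_pos (hδ i) hi]
  · by_contra hi
    have hwi : w i = 0 := le_antisymm (not_lt.mp hi) (hw.1.1 i)
    have := hw.oneFactor_le_apply i
    rw [hwi, mul_zero, add_zero] at this
    linarith

theorem IsLongOnlyMinVar.oneFactor_dotProduct_mul (hδ : ∀ i, 0 < δsq i)
    (hw : IsLongOnlyMinVar (oneFactorCov σsq β δsq) w) {K : Finset ι}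
    (hK : ∀ i, i ∈ K ↔ 0 < w i) :
    (β ⬝ᵥ w) * (1 + σsq * ∑ j ∈ K, β j ^ 2 / δsq j) =
      (w ⬝ᵥ oneFactorCov σsq β δsq *ᵥ w) * ∑ j ∈ K, β j / δsq j := by
  set b := β ⬝ᵥ w
  set lam := w ⬝ᵥ oneFactorCov σsq β δsq *ᵥ w
  have hactive : ∀ j ∈ K, β j * w j = lam * (β j / δsq j) - σsq * b * (β j ^ 2 / δsq j) := by
    intro j hj
    have := hw.oneFactor_apply_eq ((hK j).mp hj)
    field_simp [(hδ j).ne']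
    linear_combination β j * this
  have hb : b = ∑ j ∈ K, β j * w j := by
    refine (Finset.sum_subset (Finset.subset_univ K) fun j _ hj => ?_).symm
    rw [le_antisymm (not_lt.mp (mt (hK j).mpr hj)) (hw.1.1 j), mul_zero]
  rw [Finset.sum_congr rfl hactive, Finset.sum_sub_distrib, ← Finset.mul_sum,
    ← Finset.mul_sum] at hb
  linear_combination hb

theorem IsLongOnlyMinVar.oneFactor_dotProduct_pos (hσ : 0 < σsq) (hδ : ∀ i, 0 < δsq i)
    (hsign : 0 ≤ ∑ j, β j / δsq j) (hw : IsLongOnlyMinVar (oneFactorCov σsq β δsq) w)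
    {K : Finset ι} (hK : ∀ i, i ∈ K ↔ 0 < w i) (hKU : K ≠ Finset.univ) : 0 < β ⬝ᵥ w := by
  have hlam : 0 < w ⬝ᵥ oneFactorCov σsq β δsq *ᵥ w :=
    hw.dotProduct_mulVec_pos (oneFactorCov_posDef hσ.le hδ)
  by_contra! hb
  have hinactive : ∀ j ∈ Kᶜ, β j / δsq j < 0 := by
    intro j hj
    have hle := not_lt.mp (mt (hw.oneFactor_pos_iff hδ j).mpr (mt (hK j).mpr (mem_compl.mp hj)))
    have hβ : β j < 0 := by
      by_contra! hβ
      nlinarith [mul_nonneg hσ.le hβ]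
    exact div_neg_of_neg_of_pos hβ (hδ j)
  have hK_nonpos : ∑ j ∈ K, β j / δsq j ≤ 0 := by
    have hC : 0 ≤ ∑ j ∈ K, β j ^ 2 / δsq j :=
      Finset.sum_nonneg fun j _ => div_nonneg (sq_nonneg _) (hδ j).le
    have := hw.oneFactor_dotProduct_mul hδ hK
    nlinarith [mul_nonneg hσ.le hC]
  have hKc : Kᶜ.Nonempty := (compl_ne_univ_iff_nonempty Kᶜ).mp (by rwa [compl_compl])
  have := Finset.sum_neg hinactive hKc
  rw [← Finset.sum_add_sum_compl K] at hsign
  linarith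

theorem IsLongOnlyMinVar.oneFactor_sum_div_pos (hσ : 0 < σsq) (hδ : ∀ i, 0 < δsq i)
    (hw : IsLongOnlyMinVar (oneFactorCov σsq β δsq) w) {K : Finset ι}
    (hK : ∀ i, i ∈ K ↔ 0 < w i) (hb : 0 < β ⬝ᵥ w) : 0 < ∑ j ∈ K, β j / δsq j := by
  have hlam : 0 < w ⬝ᵥ oneFactorCov σsq β δsq *ᵥ w :=
    hw.dotProduct_mulVec_pos (oneFactorCov_posDef hσ.le hδ)
  have hC : 0 ≤ ∑ j ∈ K, β j ^ 2 / δsq j :=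
    Finset.sum_nonneg fun j _ => div_nonneg (sq_nonneg _) (hδ j).le
  refine pos_of_mul_pos_right ?_ hlam.le
  rw [← hw.oneFactor_dotProduct_mul hδ hK]
  positivity

theorem IsLongOnlyMinVar.oneFactor_pos_iff_lt (hσ : 0 < σsq) (hδ : ∀ i, 0 < δsq i)
    (hw : IsLongOnlyMinVar (oneFactorCov σsq β δsq) w) {K : Finset ι}
    (hK : ∀ i, i ∈ K ↔ 0 < w i) (hb : 0 < β ⬝ᵥ w) (i : ι) :
    0 < w i ↔ β i <
      (1 / σsq + ∑ j ∈ K, β j ^ 2 / δsq j) / ∑ j ∈ K, β j / δsq j := by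
  have hthreshold : (1 / σsq + ∑ j ∈ K, β j ^ 2 / δsq j) / ∑ j ∈ K, β j / δsq j =
      (w ⬝ᵥ oneFactorCov σsq β δsq *ᵥ w) / (σsq * (β ⬝ᵥ w)) := by
    rw [div_eq_div_iff (hw.oneFactor_sum_div_pos hσ hδ hK hb).ne' (by positivity),
      ← hw.oneFactor_dotProduct_mul hδ hK]
    field_simp
  rw [hthreshold, lt_div_iff₀ (by positivity), hw.oneFactor_pos_iff hδ i,
    show β i * (σsq * (β ⬝ᵥ w)) = σsq * β i * (β ⬝ᵥ w) by ring]

theorem IsLongOnlyMinVar.oneFactor_isLowerSet [Preorder ι] (hσ : 0 ≤ σsq) (hδ : ∀ i, 0 < δsq i)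
    (hmono : Monotone β) (hw : IsLongOnlyMinVar (oneFactorCov σsq β δsq) w)
    (hb : 0 < β ⬝ᵥ w) : IsLowerSet {i | 0 < w i} := by
  intro i j hji hi
  simp only [Set.mem_ofPred_eq, hw.oneFactor_pos_iff hδ] at hi ⊢
  have := mul_le_mul_of_nonneg_right (mul_le_mul_of_nonneg_left (hmono hji) hσ) hb.le
  linarith

end OneFactor

end Matrix

theorem Fin.filter_val_lt_card_eq_of_isLowerSet {p : ℕ} {K : Finset (Fin p)}
    (hK : IsLowerSet (K : Set (Fin p))) : univ.filter (fun j : Fin p => (j : ℕ) < #K) = K := by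
  obtain hU | ⟨a, ha⟩ := hK.eq_univ_or_Iio
  · rw [Finset.coe_eq_univ.mp hU]
    simp
  · rw [← Finset.coe_Iio, Finset.coe_inj] at ha
    subst ha
    ext j
    simp only [Finset.mem_filter, Finset.mem_univ, true_and, Finset.mem_Iio, Fin.card_Iio,
      Fin.lt_def]

theorem lomv_beta_threshold_dichotomy_general {p : ℕ}
    (σsq : ℝ) (hσ : 0 < σsq)
    (β δsq : Fin p → ℝ) (hδ : ∀ i, 0 < δsq i)
    (hmono : Monotone β)
    (hsign : 0 ≤ ∑ j, β j / δsq j)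
    (S : Matrix (Fin p) (Fin p) ℝ)
    (hS : S = σsq • Matrix.vecMulVec β β + Matrix.diagonal δsq)
    -- w is the (unique) LOMV solution for S
    (w : Fin p → ℝ)
    (hsum : ∑ i, w i = 1)
    (hnonneg : ∀ i, 0 ≤ w i)
    (hmin : ∀ v : Fin p → ℝ, (∑ i, v i = 1) → (∀ i, 0 ≤ v i) →
      ∑ i, ∑ j, w i * S i j * w j ≤ ∑ i, ∑ j, v i * S i j * v j)
    -- K is the active set and k = |K|
    (K : Finset (Fin p)) (hK : ∀ i, i ∈ K ↔ 0 < w i)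
    (k : ℕ) (hk : k = K.card) :
    -- Case 1: every asset is active and w coincides with the long-short GMV portfolio
    (K = Finset.univ ∧
      ∀ i, w i = (S⁻¹ *ᵥ (fun _ => (1 : ℝ))) i / ∑ j, (S⁻¹ *ᵥ (fun _ => (1 : ℝ))) j)
    -- Case 2: the active set is proper, C_K > 0, and the beta threshold holds
    ∨ (K ≠ Finset.univ ∧
      0 < ∑ j ∈ Finset.univ.filter (fun j : Fin p => (j : ℕ) < k), β j / δsq j ∧
      ∀ i, (0 < w i ↔
        β i < (1 / σsq +
            ∑ j ∈ Finset.univ.filter (fun j : Fin p => (j : ℕ) < k), β j ^ 2 / δsq j)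
          / ∑ j ∈ Finset.univ.filter (fun j : Fin p => (j : ℕ) < k), β j / δsq j)) := by
  obtain rfl : S = oneFactorCov σsq β δsq := hS
  have hw : IsLongOnlyMinVar (oneFactorCov σsq β δsq) w := by
    refine ⟨⟨hnonneg, hsum⟩, fun v hv => ?_⟩
    simpa only [Set.mem_ofPred_eq, dotProduct_mulVec_eq_sum_sum] using hmin v hv.2 hv.1
  have hposDef : (oneFactorCov σsq β δsq).PosDef := oneFactorCov_posDef hσ.le hδ
  by_cases hKU : K = Finset.univ
  · refine Or.inl ⟨hKU, eq_inv_mulVec_one_div_sum hposDef.isUnit hsum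
      (hw.dotProduct_mulVec_pos hposDef).ne' (funext fun i => ?_)⟩
    exact hw.mulVec_apply_eq (oneFactorCov_isSymm σsq β δsq) ((hK i).mp (hKU ▸ mem_univ i))
  · have hb := hw.oneFactor_dotProduct_pos hσ hδ hsign hK hKU
    have hKk : univ.filter (fun j : Fin p => (j : ℕ) < k) = K := by
      have hKset : (K : Set (Fin p)) = {i | 0 < w i} := Set.ext hK
      have hlower := hw.oneFactor_isLowerSet hσ.le hδ hmono hb
      rw [← hKset] at hlower
      exact hk ▸ Fin.filter_val_lt_card_eq_of_isLowerSet hlower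
    rw [hKk]
    exact Or.inr ⟨hKU, hw.oneFactor_sum_div_pos hσ hδ hK hb, hw.oneFactor_pos_iff_lt hσ hδ hK hb⟩

/-- **Corollary: beta threshold dichotomy.** Under the one-factor model
with ordered betas, positive idiosyncratic variances and `∑ βⱼ/δⱼ² ≥ 0`, either the
active set of the LOMV solution is all of `{1,…,p}` and the unconstrained long-short
solution `Σ⁻¹1/(1ᵀΣ⁻¹1)` is already long-only and equals `w`; or else the active set
is proper, `∑_{j≤k} βⱼ/δⱼ² > 0`, and `wᵢ > 0` iff
`βᵢ < (1/σ² + ∑_{j≤k} βⱼ²/δⱼ²)/(∑_{j≤k} βⱼ/δⱼ²)`, where `k` is the number of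
active assets. -/
theorem lomv_beta_threshold_dichotomy {p : ℕ} (hp : 0 < p)
    (σsq : ℝ) (hσ : 0 < σsq)
    (β δsq : Fin p → ℝ) (hδ : ∀ i, 0 < δsq i)
    (hmono : Monotone β)
    (hsign : 0 ≤ ∑ j, β j / δsq j)
    (S : Matrix (Fin p) (Fin p) ℝ)
    (hS : S = σsq • Matrix.vecMulVec β β + Matrix.diagonal δsq)
    -- w is the (unique) LOMV solution for S
    (w : Fin p → ℝ)
    (hsum : ∑ i, w i = 1)
    (hnonneg : ∀ i, 0 ≤ w i)
    (hmin : ∀ v : Fin p → ℝ, (∑ i, v i = 1) → (∀ i, 0 ≤ v i) →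
      ∑ i, ∑ j, w i * S i j * w j ≤ ∑ i, ∑ j, v i * S i j * v j)
    -- K is the active set and k = |K|
    (K : Finset (Fin p)) (hK : ∀ i, i ∈ K ↔ 0 < w i)
    (k : ℕ) (hk : k = K.card) :
    -- Case 1: every asset is active and w coincides with the long-short GMV portfolio
    (K = Finset.univ ∧
      ∀ i, w i = (S⁻¹ *ᵥ (fun _ => (1 : ℝ))) i / ∑ j, (S⁻¹ *ᵥ (fun _ => (1 : ℝ))) j)
    -- Case 2: the active set is proper, C_K > 0, and the beta threshold holds
    ∨ (K ≠ Finset.univ ∧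
      0 < ∑ j ∈ Finset.univ.filter (fun j : Fin p => (j : ℕ) < k), β j / δsq j ∧
      ∀ i, (0 < w i ↔
        β i < (1 / σsq +
            ∑ j ∈ Finset.univ.filter (fun j : Fin p => (j : ℕ) < k), β j ^ 2 / δsq j)
          / ∑ j ∈ Finset.univ.filter (fun j : Fin p => (j : ℕ) < k), β j / δsq j)) :=
  lomv_beta_threshold_dichotomy_general σsq hσ β δsq hδ hmono hsign S hS w hsum hnonneg hmin K hK k
    hk
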